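/- arXiv:2011.02328 — 2 statements merged into one kernel-verified Lean document; each statement's English description precedes it below -/
import Mathlib

section
/- Let K be a uniformly ergodic Markov kernel on (X,𝒳) with stationary distribution π. There exists a constant C₂ > 0, independent of the initial distribution of the chain, such that for any Markov chain (X_p)_{p≥1} with kernel K (arbitrary initial distribution), any P ≥ 1 and any bounded measurable φ : X → ℝ, Var((1/P) Σ_{p=1}^P φ(X_p)) ≤ C₂ ‖φ‖_∞² / P. -/
/-!
Expand the variance of `S = ∑_{p ≤ P} φ(Y_p)` as `∑_{p,q} cov(φ(Y_p), φ(Y_q))`. By the Markov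
property, `cov(φ(Y_p), φ(Y_{p+k})) = cov(φ(Y_p), (K^k φ)(Y_p))`, and `K^k φ` is within
`2 ‖φ‖_∞ ‖K^k(x, ·) - π‖_TV ≤ 2 ‖φ‖_∞ max(C, 1) ρ^k` of the constant `π(φ)`, uniformly in `x`;
subtracting that constant does not change the covariance, which is therefore at most
`4 ‖φ‖_∞² max(C, 1) ρ^k`. Each row of the covariance matrix thus sums to at most
`8 ‖φ‖_∞² max(C, 1) / (1 - ρ)`, so `Var S ≤ 8 max(C, 1) ‖φ‖_∞² P / (1 - ρ)`.
-/

open MeasureTheory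

/-- Total variation distance: `sup_{A measurable} |μ(A) − ν(A)|`. -/
noncomputable def tvDist {X : Type} [MeasurableSpace X] (μ ν : Measure X) : ℝ :=
  ⨆ s : {s : Set X // MeasurableSet s}, |(μ s).toReal - (ν s).toReal|

/-- `k`-fold iterate of a Markov kernel `K` (as a map `X → Measure X`), started at `x`. -/
noncomputable def kpow {X : Type} [MeasurableSpace X] (K : X → Measure X) : ℕ → X → Measure X
  | 0 => fun x => Measure.dirac x
  | k + 1 => fun x => (kpow K k x).bind K

open ProbabilityTheory

open Set Finset

section TotalVariation

variable {X : Type} [MeasurableSpace X] {μ ν : Measure X}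

lemma abs_measureReal_sub_le_tvDist [IsProbabilityMeasure μ] [IsProbabilityMeasure ν]
    {s : Set X} (hs : MeasurableSet s) : |μ.real s - ν.real s| ≤ tvDist μ ν := by
  refine le_ciSup (f := fun t : {t : Set X // MeasurableSet t} => |μ.real t - ν.real t|)
    ⟨1, ?_⟩ ⟨s, hs⟩
  rintro _ ⟨t, rfl⟩
  exact abs_sub_le_of_nonneg_of_le measureReal_nonneg measureReal_le_one measureReal_nonneg
    measureReal_le_one

lemma tvDist_le_one [IsProbabilityMeasure μ] [IsProbabilityMeasure ν] : tvDist μ ν ≤ 1 :=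
  ciSup_le fun _ => abs_sub_le_of_nonneg_of_le measureReal_nonneg measureReal_le_one
    measureReal_nonneg measureReal_le_one

lemma abs_integral_sub_integral_le_of_le [IsFiniteMeasure μ] (hνμ : ν ≤ μ) {g : X → ℝ}
    (hg : Measurable g) {c : ℝ} (hgc : ∀ x, |g x| ≤ c) :
    |∫ x, g x ∂μ - ∫ x, g x ∂ν| ≤ c * (μ.real univ - ν.real univ) := by
  have : IsFiniteMeasure ν := isFiniteMeasure_of_le μ hνμ
  have hint : ∀ (m : Measure X) [IsFiniteMeasure m], Integrable g m := fun m _ =>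
    .of_bound hg.aestronglyMeasurable c (ae_of_all _ hgc)
  have hdiff : (μ - ν).real univ = μ.real univ - ν.real univ := by
    rw [measureReal_def, Measure.sub_apply .univ hνμ,
      ENNReal.toReal_sub_of_le (hνμ univ) (measure_ne_top _ _), measureReal_def, measureReal_def]
  conv_lhs => rw [← Measure.sub_add_cancel_of_le hνμ, integral_add_measure (hint _) (hint _),
    add_sub_cancel_right, ← Real.norm_eq_abs]
  exact hdiff ▸ norm_integral_le_of_norm_le_const (ae_of_all _ hgc)

lemma abs_integral_sub_integral_le_tvDist [IsProbabilityMeasure μ] [IsProbabilityMeasure ν]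
    {g : X → ℝ} (hg : Measurable g) {c : ℝ} (hgc : ∀ x, |g x| ≤ c) :
    |∫ x, g x ∂μ - ∫ x, g x ∂ν| ≤ 2 * c * tvDist μ ν := by
  obtain ⟨s, hs, hνμ, hμν⟩ := hahn_decomposition μ ν
  have hc : 0 ≤ c := (abs_nonneg _).trans (hgc (nonempty_of_isProbabilityMeasure μ).some)
  have hint : ∀ (m : Measure X) [IsFiniteMeasure m], Integrable g m := fun m _ =>
    .of_bound hg.aestronglyMeasurable c (ae_of_all _ hgc)
  have hs_le : ν.restrict s ≤ μ.restrict s := Measure.le_iff.2 fun t ht => by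
    rw [Measure.restrict_apply ht, Measure.restrict_apply ht]
    exact hνμ _ (ht.inter hs) inter_subset_right
  have hsc_le : μ.restrict sᶜ ≤ ν.restrict sᶜ := Measure.le_iff.2 fun t ht => by
    rw [Measure.restrict_apply ht, Measure.restrict_apply ht]
    exact hμν _ (ht.inter hs.compl) inter_subset_right
  have h_on_s := abs_integral_sub_integral_le_of_le hs_le hg hgc
  have h_on_sc := abs_integral_sub_integral_le_of_le hsc_le hg hgc
  simp only [measureReal_restrict_apply_univ] at h_on_s h_on_sc
  have htv_s : μ.real s - ν.real s ≤ tvDist μ ν :=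
    (le_abs_self _).trans (abs_measureReal_sub_le_tvDist hs)
  have htv_sc : ν.real sᶜ - μ.real sᶜ ≤ tvDist μ ν :=
    (le_abs_self _).trans (abs_sub_comm (μ.real sᶜ) _ ▸ abs_measureReal_sub_le_tvDist hs.compl)
  rw [← integral_add_compl hs (hint μ), ← integral_add_compl hs (hint ν)]
  calc _ = |(∫ x in s, g x ∂μ - ∫ x in s, g x ∂ν) - (∫ x in sᶜ, g x ∂ν - ∫ x in sᶜ, g x ∂μ)| := by
        congr 1; ring
    _ ≤ c * (μ.real s - ν.real s) + c * (ν.real sᶜ - μ.real sᶜ) :=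
        (abs_sub _ _).trans (add_le_add h_on_s h_on_sc)
    _ ≤ 2 * c * tvDist μ ν := by nlinarith

end TotalVariation

section IteratedKernel

variable {X : Type} [MeasurableSpace X] {K : X → Measure X}

lemma measurable_kpow (hK : Measurable K) (k : ℕ) : Measurable (kpow K k) := by
  induction k with
  | zero => exact Measure.measurable_dirac
  | succ k ih => exact (Measure.measurable_bind' hK).comp ih

lemma isProbabilityMeasure_kpow (hK : Measurable K) (hKprob : ∀ x, IsProbabilityMeasure (K x))
    (k : ℕ) (x : X) : IsProbabilityMeasure (kpow K k x) := by
  induction k with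
  | zero => exact Measure.dirac.isProbabilityMeasure
  | succ k ih => exact isProbabilityMeasure_bind hK.aemeasurable (ae_of_all _ hKprob)

lemma measurable_integral_kpow (hK : Measurable K) {g : X → ℝ} (hg : Measurable g) (k : ℕ) :
    Measurable fun x => ∫ y, g y ∂kpow K k x :=
  (hg.stronglyMeasurable.integral_kernel (κ := ⟨kpow K k, measurable_kpow hK k⟩)).measurable

lemma tvDist_kpow_le_max_mul_pow (hK : Measurable K) (hKprob : ∀ x, IsProbabilityMeasure (K x))
    {π : Measure X} [IsProbabilityMeasure π] {C ρ : ℝ} (hρ0 : 0 ≤ ρ)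
    (herg : ∀ (x : X) (k : ℕ), 1 ≤ k → tvDist (kpow K k x) π ≤ C * ρ ^ k) (x : X) (k : ℕ) :
    tvDist (kpow K k x) π ≤ max C 1 * ρ ^ k := by
  have := isProbabilityMeasure_kpow hK hKprob k x
  rcases Nat.eq_zero_or_pos k with rfl | hk
  · calc _ ≤ 1 := tvDist_le_one
      _ ≤ _ := by simp
  · exact (herg x k hk).trans (by gcongr; exact le_max_left _ _)

end IteratedKernel

lemma sum_pow_dist_le {ρ : ℝ} (hρ0 : 0 ≤ ρ) (hρ1 : ρ < 1) (p : ℕ) (s : Finset ℕ) :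
    ∑ q ∈ s, ρ ^ p.dist q ≤ 2 / (1 - ρ) := by
  classical
  have hfiber : ∀ j, #{q ∈ s | p.dist q = j} ≤ 2 := fun j =>
    calc #{q ∈ s | p.dist q = j} ≤ #{p - j, p + j} := card_le_card fun q hq => by
          rw [mem_filter, Nat.dist] at hq
          rw [Finset.mem_insert, Finset.mem_singleton]
          omega
      _ ≤ 2 := card_le_two
  have hgeom : ∑ j ∈ s.image p.dist, ρ ^ j ≤ (1 - ρ)⁻¹ :=
    tsum_geometric_of_lt_one hρ0 hρ1 ▸
      (summable_geometric_of_lt_one hρ0 hρ1).sum_le_tsum _ fun j _ => pow_nonneg hρ0 j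
  calc ∑ q ∈ s, ρ ^ p.dist q
      = ∑ j ∈ s.image p.dist, #{q ∈ s | p.dist q = j} • ρ ^ j := sum_comp (ρ ^ ·) p.dist
    _ ≤ ∑ j ∈ s.image p.dist, 2 * ρ ^ j := sum_le_sum fun j _ => by
        rw [nsmul_eq_mul]; gcongr; exact_mod_cast hfiber j
    _ ≤ 2 / (1 - ρ) := by rw [← mul_sum, div_eq_mul_inv]; gcongr

section Covariance

variable {Ω : Type*} [MeasurableSpace Ω] {μ : Measure Ω} [IsProbabilityMeasure μ]

lemma abs_integral_le_of_forall_abs_le {f : Ω → ℝ} {c : ℝ} (hfc : ∀ ω, |f ω| ≤ c) :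
    |∫ ω, f ω ∂μ| ≤ c := by
  simpa using norm_integral_le_of_norm_le_const (μ := μ) (f := f) (ae_of_all _ hfc)

lemma abs_covariance_le {U W : Ω → ℝ} (hU : AEStronglyMeasurable U μ)
    (hW : AEStronglyMeasurable W μ) {a b : ℝ} (hUa : ∀ ω, |U ω| ≤ a) (hWb : ∀ ω, |W ω| ≤ b) :
    |cov[U, W; μ]| ≤ 2 * a * b := by
  have ω₀ := (nonempty_of_isProbabilityMeasure μ).some
  have ha : 0 ≤ a := (abs_nonneg _).trans (hUa ω₀)
  have hb : 0 ≤ b := (abs_nonneg _).trans (hWb ω₀)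
  have hUW : ∀ ω, |(U * W) ω| ≤ a * b := fun ω => by
    rw [Pi.mul_apply, abs_mul]; exact mul_le_mul (hUa ω) (hWb ω) (abs_nonneg _) ha
  rw [covariance_eq_sub (.of_bound hU a (ae_of_all _ hUa)) (.of_bound hW b (ae_of_all _ hWb))]
  calc _ ≤ |μ[U * W]| + |μ[U]| * |μ[W]| := (abs_sub _ _).trans_eq (by rw [abs_mul])
    _ ≤ a * b + a * b := by
        gcongr
        exacts [abs_integral_le_of_forall_abs_le hUW, abs_integral_le_of_forall_abs_le hUa,
          abs_integral_le_of_forall_abs_le hWb]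
    _ = 2 * a * b := by ring

lemma variance_sum_le_of_abs_covariance_le {X : ℕ → Ω → ℝ} (hX : ∀ p, MemLp (X p) 2 μ)
    {A ρ : ℝ} (hρ0 : 0 ≤ ρ) (hρ1 : ρ < 1)
    (hcov : ∀ p k, |cov[X p, X (p + k); μ]| ≤ A * ρ ^ k) (s : Finset ℕ) :
    Var[fun ω => ∑ p ∈ s, X p ω; μ] ≤ 2 * A * #s / (1 - ρ) := by
  have hA : 0 ≤ A := by simpa using (abs_nonneg _).trans (hcov 0 0)
  have hcov_dist : ∀ p q, cov[X p, X q; μ] ≤ A * ρ ^ p.dist q := fun p q => by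
    rcases le_total p q with h | h
    · obtain ⟨k, rfl⟩ := Nat.exists_eq_add_of_le h
      simpa [Nat.dist_eq_sub_of_le h] using (le_abs_self _).trans (hcov p k)
    · obtain ⟨k, rfl⟩ := Nat.exists_eq_add_of_le h
      rw [covariance_comm, Nat.dist_comm]
      simpa [Nat.dist_eq_sub_of_le h] using (le_abs_self _).trans (hcov q k)
  rw [variance_fun_sum' fun p _ => hX p]
  calc _ ≤ ∑ p ∈ s, ∑ q ∈ s, A * ρ ^ p.dist q := by gcongr with p _ q _; exact hcov_dist p q
    _ ≤ ∑ p ∈ s, A * (2 / (1 - ρ)) := by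
        gcongr with p; rw [← mul_sum]; gcongr; exact sum_pow_dist_le hρ0 hρ1 p s
    _ = 2 * A * #s / (1 - ρ) := by rw [sum_const, nsmul_eq_mul]; ring

end Covariance

section PairwiseMarkov

variable {X : Type} [MeasurableSpace X] {K : X → Measure X}
  {Ω : Type*} [MeasurableSpace Ω] {μ : Measure Ω} {Y : ℕ → Ω → X}

def IsPairwiseMarkov (K : X → Measure X) (Y : ℕ → Ω → X) (μ : Measure Ω) : Prop :=
  ∀ (p k : ℕ) (f g : X → ℝ), Measurable f → Measurable g →
    (∀ x, |f x| ≤ 1) → (∀ x, |g x| ≤ 1) →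
    ∫ ω, f (Y p ω) * g (Y (p + k) ω) ∂μ = ∫ ω, f (Y p ω) * ∫ y, g y ∂(kpow K k (Y p ω)) ∂μ

lemma IsPairwiseMarkov.integral_mul_eq (hM : IsPairwiseMarkov K Y μ) {f g : X → ℝ}
    (hf : Measurable f) (hg : Measurable g) {a b : ℝ} (hfa : ∀ x, |f x| ≤ a)
    (hgb : ∀ x, |g x| ≤ b) (p k : ℕ) :
    ∫ ω, f (Y p ω) * g (Y (p + k) ω) ∂μ
      = ∫ ω, f (Y p ω) * ∫ y, g y ∂(kpow K k (Y p ω)) ∂μ := by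
  have hmax : ∀ c : ℝ, 0 < max c 1 := fun c => lt_max_of_lt_right one_pos
  have hnormalize : ∀ {h : X → ℝ} {c : ℝ}, (∀ x, |h x| ≤ c) → ∀ x, |h x / max c 1| ≤ 1 :=
    fun {_ c} hc x => by
      rw [abs_div, abs_of_pos (hmax c), div_le_one (hmax c)]
      exact (hc x).trans (le_max_left _ _)
  have h := hM p k _ _ (hf.div_const (max a 1)) (hg.div_const (max b 1)) (hnormalize hfa)
    (hnormalize hgb)
  simp only [integral_div, div_mul_div_comm] at h
  exact (div_left_inj' (mul_pos (hmax a) (hmax b)).ne').1 h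

lemma IsPairwiseMarkov.covariance_eq [IsProbabilityMeasure μ] (hM : IsPairwiseMarkov K Y μ)
    (hK : Measurable K) (hKprob : ∀ x, IsProbabilityMeasure (K x)) (hY : ∀ p, Measurable (Y p))
    {ψ : X → ℝ} (hψ : Measurable ψ) {c : ℝ} (hψc : ∀ x, |ψ x| ≤ c) (p k : ℕ) :
    cov[fun ω => ψ (Y p ω), fun ω => ψ (Y (p + k) ω); μ]
      = cov[fun ω => ψ (Y p ω), fun ω => ∫ y, ψ y ∂kpow K k (Y p ω); μ] := by
  have hψk : ∀ x, |∫ y, ψ y ∂kpow K k x| ≤ c := fun x =>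
    have := isProbabilityMeasure_kpow hK hKprob k x
    abs_integral_le_of_forall_abs_le hψc
  have hmemLp : ∀ {h : X → ℝ}, Measurable h → (∀ x, |h x| ≤ c) → ∀ q,
      MemLp (fun ω => h (Y q ω)) 2 μ := fun hh hhc q =>
    .of_bound (hh.comp (hY q)).aestronglyMeasurable c (ae_of_all _ fun ω => hhc _)
  have hmean := hM.integral_mul_eq (f := fun _ => 1) measurable_const hψ (a := 1) (by simp) hψc p k
  simp only [one_mul] at hmean
  rw [covariance_eq_sub (hmemLp hψ hψc p) (hmemLp hψ hψc (p + k)),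
    covariance_eq_sub (hmemLp hψ hψc p) (hmemLp (measurable_integral_kpow hK hψ k) hψk p)]
  simp only [Pi.mul_apply, hM.integral_mul_eq hψ hψ hψc hψc p k, hmean]

lemma IsPairwiseMarkov.abs_covariance_le_of_tvDist_le [IsProbabilityMeasure μ]
    (hM : IsPairwiseMarkov K Y μ) (hK : Measurable K) (hKprob : ∀ x, IsProbabilityMeasure (K x)) (hY : ∀ p, Measurable (Y p))
    {ψ : X → ℝ} (hψ : Measurable ψ) {c : ℝ} (hψc : ∀ x, |ψ x| ≤ c) {π : Measure X}
    [IsProbabilityMeasure π] {k : ℕ} {ε : ℝ} (hε : ∀ x, tvDist (kpow K k x) π ≤ ε) (p : ℕ) :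
    |cov[fun ω => ψ (Y p ω), fun ω => ψ (Y (p + k) ω); μ]| ≤ 4 * c ^ 2 * ε := by
  have hc : 0 ≤ c := (abs_nonneg _).trans (hψc (nonempty_of_isProbabilityMeasure π).some)
  have hψk := measurable_integral_kpow hK hψ k
  have hdev : ∀ ω, |∫ y, ψ y ∂kpow K k (Y p ω) - ∫ y, ψ y ∂π| ≤ 2 * c * ε := fun ω => by
    have := isProbabilityMeasure_kpow hK hKprob k (Y p ω)
    exact (abs_integral_sub_integral_le_tvDist hψ hψc).trans (by gcongr; exact hε _)
  have hint : Integrable (fun ω => ∫ y, ψ y ∂kpow K k (Y p ω)) μ :=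
    .of_bound (hψk.comp (hY p)).aestronglyMeasurable c (ae_of_all _ fun ω =>
      have := isProbabilityMeasure_kpow hK hKprob k (Y p ω)
      abs_integral_le_of_forall_abs_le hψc)
  rw [hM.covariance_eq hK hKprob hY hψ hψc, ← covariance_sub_const_right hint (∫ y, ψ y ∂π)]
  calc _ ≤ 2 * c * (2 * c * ε) := abs_covariance_le (hψ.comp (hY p)).aestronglyMeasurable
        ((hψk.comp (hY p)).sub_const _).aestronglyMeasurable (fun ω => hψc _) hdev
    _ = 4 * c ^ 2 * ε := by ring

end PairwiseMarkov

theorem variance_average_le_of_unif_ergodic_general {X : Type} [MeasurableSpace X]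
    (K : X → Measure X) (hKmeas : Measurable K) (hKprob : ∀ x, IsProbabilityMeasure (K x))
    (π : Measure X) [IsProbabilityMeasure π]
    (C ρ : ℝ) (hρ0 : 0 ≤ ρ) (hρ1 : ρ < 1)
    (herg : ∀ (x : X) (k : ℕ), 1 ≤ k → tvDist (kpow K k x) π ≤ C * ρ ^ k) :
    ∃ C₂ : ℝ, 0 < C₂ ∧
      ∀ (Ω : Type) (_ : MeasurableSpace Ω) (μ : Measure Ω), IsProbabilityMeasure μ →
      ∀ (Y : ℕ → Ω → X), (∀ p, Measurable (Y p)) →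
      -- Markov property for the two-dimensional marginals of the chain, with kernel `K`
      (∀ (p k : ℕ) (f g : X → ℝ), Measurable f → Measurable g →
        (∀ x, |f x| ≤ 1) → (∀ x, |g x| ≤ 1) →
        ∫ ω, f (Y p ω) * g (Y (p + k) ω) ∂μ
          = ∫ ω, f (Y p ω) * ∫ y, g y ∂(kpow K k (Y p ω)) ∂μ) →
      ∀ (P : ℕ), 1 ≤ P → ∀ (φ : X → ℝ) (B : ℝ), Measurable φ → (∀ x, |φ x| ≤ B) →
        variance (fun ω => (1 / (P : ℝ)) * ∑ p ∈ Finset.Icc 1 P, φ (Y p ω)) μ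
          ≤ C₂ * B ^ 2 / P := by
  have hρ : 0 < 1 - ρ := by linarith
  have hD : 0 < max C 1 := lt_max_of_lt_right one_pos
  refine ⟨8 * max C 1 / (1 - ρ), by positivity, fun Ω _ μ _ Y hY hM P _ φ B hφ hφB => ?_⟩
  have hcov : ∀ p k, |cov[fun ω => φ (Y p ω), fun ω => φ (Y (p + k) ω); μ]|
      ≤ 4 * B ^ 2 * max C 1 * ρ ^ k := fun p k =>
    (IsPairwiseMarkov.abs_covariance_le_of_tvDist_le hM hKmeas hKprob hY hφ hφB
      (tvDist_kpow_le_max_mul_pow hKmeas hKprob hρ0 herg · k) p).trans_eq (by ring)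
  have hvar := variance_sum_le_of_abs_covariance_le (X := fun p ω => φ (Y p ω))
    (fun p => .of_bound (hφ.comp (hY p)).aestronglyMeasurable B (ae_of_all _ fun ω => hφB _))
    hρ0 hρ1 hcov (Finset.Icc 1 P)
  rw [Nat.card_Icc, add_tsub_cancel_right] at hvar
  rw [variance_const_mul]
  calc _ ≤ (1 / (P : ℝ)) ^ 2 * (2 * (4 * B ^ 2 * max C 1) * P / (1 - ρ)) := by gcongr
    _ = _ := by field_simp; ring

/-- For a uniformly ergodic kernel `K` with stationary distribution `π`, there is a constant
`C₂ > 0`, independent of the initial distribution, such that for any Markov chain `(Y_p)_{p≥1}`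
with kernel `K`, any `P ≥ 1` and any bounded measurable `φ`,
`Var((1/P) ∑_{p=1}^P φ(Y_p)) ≤ C₂ ‖φ‖_∞² / P`. -/
theorem variance_average_le_of_unif_ergodic {X : Type} [MeasurableSpace X]
    (K : X → Measure X) (hKmeas : Measurable K) (hKprob : ∀ x, IsProbabilityMeasure (K x))
    (π : Measure X) [IsProbabilityMeasure π] (hinv : π.bind K = π)
    (C ρ : ℝ) (hC : 0 ≤ C) (hρ0 : 0 ≤ ρ) (hρ1 : ρ < 1)
    (herg : ∀ (x : X) (k : ℕ), 1 ≤ k → tvDist (kpow K k x) π ≤ C * ρ ^ k) :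
    ∃ C₂ : ℝ, 0 < C₂ ∧
      ∀ (Ω : Type) (_ : MeasurableSpace Ω) (μ : Measure Ω), IsProbabilityMeasure μ →
      ∀ (Y : ℕ → Ω → X), (∀ p, Measurable (Y p)) →
      -- Markov property for the two-dimensional marginals of the chain, with kernel `K`
      (∀ (p k : ℕ) (f g : X → ℝ), Measurable f → Measurable g →
        (∀ x, |f x| ≤ 1) → (∀ x, |g x| ≤ 1) →
        ∫ ω, f (Y p ω) * g (Y (p + k) ω) ∂μ
          = ∫ ω, f (Y p ω) * ∫ y, g y ∂(kpow K k (Y p ω)) ∂μ) →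
      ∀ (P : ℕ), 1 ≤ P → ∀ (φ : X → ℝ) (B : ℝ), Measurable φ → (∀ x, |φ x| ≤ B) →
        variance (fun ω => (1 / (P : ℝ)) * ∑ p ∈ Finset.Icc 1 P, φ (Y p ω)) μ
          ≤ C₂ * B ^ 2 / P :=
  variance_average_le_of_unif_ergodic_general K hKmeas hKprob π C ρ hρ0 hρ1 herg
end

section
/- Let (X_n) and (Y_n) be sequences of random variables with X_n ⇒ P_X (convergence in distribution), and suppose that the conditional distribution of Y_n given σ(X_n) converges to P_Y in the sense that E[e^{ivY_n} | X_n] → E[e^{ivY}] almost surely for every v ∈ ℝ, where Y ∼ P_Y. Then the pair (X_n, Y_n) converges in distribution to the product measure P_X ⊗ P_Y. -/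
/-!
Condition on `X_n`: since `e^{iuX_n}` is `σ(X_n)`-measurable, the pull-out property gives
`E[e^{iuX_n} e^{ivY_n}] = E[e^{iuX_n} E[e^{ivY_n} | X_n]]`. The conditional characteristic
functions are bounded by `1` and converge a.s. to `φ_Y(v)`, so by dominated convergence they
converge in `L¹`; hence the joint characteristic function is asymptotically
`E[e^{iuX_n}] φ_Y(v)`, which tends to `φ_X(u) φ_Y(v)`.
-/

open MeasureTheory Filter Complex
open scoped Topology

section

variable {Ω : Type*} {m m0 : MeasurableSpace Ω} {μ : Measure Ω}

lemma norm_exp_ofReal_mul_ofReal_mul_I (t x : ℝ) : ‖exp (t * x * I)‖ = 1 := by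
  rw [← ofReal_mul, norm_exp_ofReal_mul_I]

lemma tendsto_integral_norm_sub_of_ae_tendsto_of_ae_bdd {E : Type*} [NormedAddCommGroup E]
    [IsFiniteMeasure μ] {h : ℕ → Ω → E} {c : E} {C : ℝ}
    (hmeas : ∀ n, AEStronglyMeasurable (h n) μ) (hbdd : ∀ n, ∀ᵐ ω ∂μ, ‖h n ω‖ ≤ C)
    (hlim : ∀ᵐ ω ∂μ, Tendsto (fun n => h n ω) atTop (𝓝 c)) :
    Tendsto (fun n => ∫ ω, ‖h n ω - c‖ ∂μ) atTop (𝓝 0) := by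
  have := tendsto_integral_of_dominated_convergence (fun _ => C + ‖c‖)
    (fun n => ((hmeas n).sub aestronglyMeasurable_const).norm) (integrable_const _)
    (fun n => (hbdd n).mono fun ω hω => by
      rw [norm_norm]
      exact (norm_sub_le _ _).trans (by linarith))
    (hlim.mono fun ω hω => tendsto_iff_norm_sub_tendsto_zero.mp hω)
  simpa using this

lemma integral_mul_eq_integral_mul_condExp (hm : m ≤ m0) [SigmaFinite (μ.trim hm)]
    {f g : Ω → ℂ} {C : ℝ} (hf : StronglyMeasurable[m] f) (hf_bdd : ∀ ω, ‖f ω‖ ≤ C)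
    (hg : Integrable g μ) :
    ∫ ω, f ω * g ω ∂μ = ∫ ω, f ω * μ[g | m] ω ∂μ := by
  have hfg : Integrable (fun ω => f ω * g ω) μ :=
    hg.bdd_mul (hf.mono hm).aestronglyMeasurable (ae_of_all _ hf_bdd)
  rw [← integral_condExp hm]
  exact integral_congr_ae
    (condExp_bilin_of_aestronglyMeasurable_left (.mul ℝ ℂ) hf.aestronglyMeasurable hfg hg)

lemma norm_integral_mul_sub_integral_mul_le (hm : m ≤ m0) [IsFiniteMeasure μ]
    {f g : Ω → ℂ} {C : ℝ} (hf : StronglyMeasurable[m] f) (hf_bdd : ∀ ω, ‖f ω‖ ≤ C)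
    (hg : Integrable g μ) (c : ℂ) :
    ‖∫ ω, f ω * g ω ∂μ - (∫ ω, f ω ∂μ) * c‖ ≤ C * ∫ ω, ‖μ[g | m] ω - c‖ ∂μ := by
  have hf_meas : AEStronglyMeasurable f μ := (hf.mono hm).aestronglyMeasurable
  have h_int : Integrable (fun ω => f ω * μ[g | m] ω) μ :=
    integrable_condExp.bdd_mul hf_meas (ae_of_all _ hf_bdd)
  have h_int' : Integrable (fun ω => f ω * c) μ :=
    (integrable_const c).bdd_mul hf_meas (ae_of_all _ hf_bdd)
  calc ‖∫ ω, f ω * g ω ∂μ - (∫ ω, f ω ∂μ) * c‖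
      = ‖∫ ω, f ω * (μ[g | m] ω - c) ∂μ‖ := by
        simp_rw [integral_mul_eq_integral_mul_condExp hm hf hf_bdd hg, ← integral_mul_const,
          ← integral_sub h_int h_int', mul_sub]
    _ ≤ ∫ ω, C * ‖μ[g | m] ω - c‖ ∂μ :=
        norm_integral_le_of_norm_le (by fun_prop) (ae_of_all _ fun ω => by
          rw [norm_mul]
          exact mul_le_mul_of_nonneg_right (hf_bdd ω) (norm_nonneg _))
    _ = C * ∫ ω, ‖μ[g | m] ω - c‖ ∂μ := integral_const_mul C _

theorem tendsto_integral_mul_sub_integral_mul_of_ae_tendsto_condExp [IsFiniteMeasure μ]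
    {ℱ : ℕ → MeasurableSpace Ω} (hℱ : ∀ n, ℱ n ≤ m0) {f g : ℕ → Ω → ℂ} {C D : ℝ} {c : ℂ}
    (hf : ∀ n, StronglyMeasurable[ℱ n] (f n)) (hf_bdd : ∀ n ω, ‖f n ω‖ ≤ C)
    (hg : ∀ n, Integrable (g n) μ) (hg_bdd : ∀ n ω, ‖g n ω‖ ≤ D)
    (hlim : ∀ᵐ ω ∂μ, Tendsto (fun n => μ[g n | ℱ n] ω) atTop (𝓝 c)) :
    Tendsto (fun n => ∫ ω, f n ω * g n ω ∂μ - (∫ ω, f n ω ∂μ) * c) atTop (𝓝 0) := by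
  have h_L1 : Tendsto (fun n => ∫ ω, ‖μ[g n | ℱ n] ω - c‖ ∂μ) atTop (𝓝 0) :=
    tendsto_integral_norm_sub_of_ae_tendsto_of_ae_bdd
      (fun n => (stronglyMeasurable_condExp.mono (hℱ n)).aestronglyMeasurable)
      (fun n => ae_bdd_norm_condExp_of_ae_bdd_norm (ae_of_all _ (hg_bdd n))) hlim
  refine squeeze_zero_norm (fun n => ?_) (by simpa using h_L1.const_mul C)
  exact norm_integral_mul_sub_integral_mul_le (hℱ n) (hf n) (hf_bdd n) (hg n) c

end

theorem joint_char_tendsto_of_cond_char_tendsto_general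
    {Ω : Type} {m0 : MeasurableSpace Ω} (μ : Measure Ω) [IsProbabilityMeasure μ]
    (X Y : ℕ → Ω → ℝ) (hX : ∀ n, Measurable (X n)) (hY : ∀ n, Measurable (Y n))
    (PX PY : Measure ℝ)
    (hXconv : ∀ u : ℝ,
      Tendsto (fun n => ∫ ω, Complex.exp (u * X n ω * Complex.I) ∂μ) atTop
        (𝓝 (∫ x, Complex.exp (u * x * Complex.I) ∂PX)))
    (hYcond : ∀ v : ℝ,
      ∀ᵐ ω ∂μ, Tendsto
        (fun n =>
          (μ[(fun ω' => Complex.exp (v * Y n ω' * Complex.I)) |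
            MeasurableSpace.comap (X n) (borel ℝ)]) ω)
        atTop (𝓝 (∫ y, Complex.exp (v * y * Complex.I) ∂PY))) :
    ∀ u v : ℝ,
      Tendsto (fun n => ∫ ω, Complex.exp ((u * X n ω + v * Y n ω) * Complex.I) ∂μ) atTop
        (𝓝 ((∫ x, Complex.exp (u * x * Complex.I) ∂PX)
          * (∫ y, Complex.exp (v * y * Complex.I) ∂PY))) := by
  intro u v
  rw [← BorelSpace.measurable_eq] at hYcond
  have h_uncorr := tendsto_integral_mul_sub_integral_mul_of_ae_tendsto_condExp
    (fun n => (hX n).comap_le)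
    (fun n => (by fun_prop : Measurable fun x : ℝ => exp (u * x * I)).comp
      (comap_measurable (X n)) |>.stronglyMeasurable)
    (fun n ω => (norm_exp_ofReal_mul_ofReal_mul_I u (X n ω)).le)
    (fun n => (integrable_const (1 : ℝ)).mono' (by fun_prop)
      (ae_of_all _ fun ω => (norm_exp_ofReal_mul_ofReal_mul_I v (Y n ω)).le))
    (fun n ω => (norm_exp_ofReal_mul_ofReal_mul_I v (Y n ω)).le) (hYcond v)
  simpa [add_mul, exp_add] using
    h_uncorr.add ((hXconv u).mul_const (∫ y, exp (v * y * I) ∂PY))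

/-- If `X_n ⇒ P_X` and `E[e^{ivY_n} | X_n] → E[e^{ivY}]` a.s. for every `v`, then
`(X_n, Y_n)` converges in distribution to the product `P_X ⊗ P_Y`, in the sense of
joint characteristic functions. -/
theorem joint_char_tendsto_of_cond_char_tendsto
    {Ω : Type} {m0 : MeasurableSpace Ω} (μ : Measure Ω) [IsProbabilityMeasure μ]
    (X Y : ℕ → Ω → ℝ) (hX : ∀ n, Measurable (X n)) (hY : ∀ n, Measurable (Y n))
    (PX PY : Measure ℝ) [IsProbabilityMeasure PX] [IsProbabilityMeasure PY]
    (hXconv : ∀ u : ℝ,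
      Tendsto (fun n => ∫ ω, Complex.exp (u * X n ω * Complex.I) ∂μ) atTop
        (𝓝 (∫ x, Complex.exp (u * x * Complex.I) ∂PX)))
    (hYcond : ∀ v : ℝ,
      ∀ᵐ ω ∂μ, Tendsto
        (fun n =>
          (μ[(fun ω' => Complex.exp (v * Y n ω' * Complex.I)) |
            MeasurableSpace.comap (X n) (borel ℝ)]) ω)
        atTop (𝓝 (∫ y, Complex.exp (v * y * Complex.I) ∂PY))) :
    ∀ u v : ℝ,
      Tendsto (fun n => ∫ ω, Complex.exp ((u * X n ω + v * Y n ω) * Complex.I) ∂μ) atTop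
        (𝓝 ((∫ x, Complex.exp (u * x * Complex.I) ∂PX)
          * (∫ y, Complex.exp (v * y * Complex.I) ∂PY))) :=
  joint_char_tendsto_of_cond_char_tendsto_general (m0 := m0) μ X Y hX hY PX PY hXconv hYcond
end
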